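/- arXiv:2506.21893 — 4 statements merged into one kernel-verified Lean document; each statement's English description precedes it below -/
import Mathlib

section
/- Let K be a positive integer and let C11_k ≥ 0, C13_k > 0 (for k = 1,…,K), C12 ≥ 0, C14 > 0, T^G ≥ 0, T^D_k ≥ 0, f̂_max > 0, f̃_max > 0 and T_max be real constants with T_max > T^G and T_max > max_k T^D_k. Consider the optimization problem: minimize Σ_{k=1}^{K} C11_k·f̂_k² + C12·f̃² over real variables f̂_1,…,f̂_K, f̃, τ subject to τ ≤ T_max; C13_k/f̂_k − τ + T^G ≤ 0 for all k; C14/f̃ − τ + max_k T^D_k ≤ 0; 0 < f̂_k ≤ f̂_max for all k; and 0 < f̃ ≤ f̃_max. Assume the point f̂*_k = C13_k/(T_max − T^G), f̃* = C14/(T_max − max_k T^D_k), τ* = T_max is feasible (i.e., f̂*_k ≤ f̂_max for all k and f̃* ≤ f̃_max). Then this point is a global minimizer: for every feasible (f̂_1,…,f̂_K, f̃, τ), Σ_k C11_k·(f̂*_k)² + C12·(f̃*)² ≤ Σ_k C11_k·f̂_k² + C12·f̃². -/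
open Finset

/-- **Lemma 1**: the closed-form point `f̂*_k = C13_k/(T_max − T^G)`,
`f̃* = C14/(T_max − max_k T^D_k)`, `τ* = T_max` is a global minimizer of the
CPU-frequency allocation subproblem. -/
theorem cpu_frequency_closed_form_optimal
    (K : ℕ) (hK : 0 < K)
    (C11 C13 : Fin K → ℝ) (hC11 : ∀ k, 0 ≤ C11 k) (hC13 : ∀ k, 0 < C13 k)
    (C12 C14 : ℝ) (hC12 : 0 ≤ C12) (hC14 : 0 < C14)
    (TG : ℝ) (hTG : 0 ≤ TG)
    (TD : Fin K → ℝ) (hTD : ∀ k, 0 ≤ TD k)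
    (fhmax ftmax Tmax : ℝ) (hfhmax : 0 < fhmax) (hftmax : 0 < ftmax)
    (hTmaxG : TG < Tmax) (hTmaxD : ∀ k, TD k < Tmax)
    -- feasibility of the closed-form candidate point
    (hfeas1 : ∀ k, C13 k / (Tmax - TG) ≤ fhmax)
    (hfeas2 : C14 / (Tmax - ⨆ k, TD k) ≤ ftmax) :
    -- the candidate point is a global minimizer
    ∀ (fh : Fin K → ℝ) (ft τ : ℝ),
      τ ≤ Tmax →
      (∀ k, C13 k / fh k - τ + TG ≤ 0) →
      C14 / ft - τ + (⨆ k, TD k) ≤ 0 →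
      (∀ k, 0 < fh k ∧ fh k ≤ fhmax) →
      (0 < ft ∧ ft ≤ ftmax) →
      ∑ k : Fin K, C11 k * (C13 k / (Tmax - TG)) ^ 2
          + C12 * (C14 / (Tmax - ⨆ k, TD k)) ^ 2
        ≤ ∑ k : Fin K, C11 k * fh k ^ 2 + C12 * ft ^ 2 := by
  intro fh ft τ hτ hloc hedge hfh hft
  haveI : Nonempty (Fin K) := ⟨⟨0, hK⟩⟩
  have hGpos : (0:ℝ) < Tmax - TG := by linarith
  obtain ⟨k₀, hk₀⟩ := Finite.exists_max TD
  have hsup_eq : (⨆ k, TD k) = TD k₀ :=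
    le_antisymm (ciSup_le hk₀) (le_ciSup (Set.finite_range TD).bddAbove k₀)
  have hDpos : (0:ℝ) < Tmax - ⨆ k, TD k := by
    rw [hsup_eq]; linarith [hTmaxD k₀]
  -- fh bound
  have h1 : ∀ k, C13 k / (Tmax - TG) ≤ fh k := by
    intro k
    have hfk := (hfh k).1
    have : C13 k / fh k ≤ Tmax - TG := by linarith [hloc k]
    rw [div_le_iff₀ hGpos]
    calc C13 k = (C13 k / fh k) * fh k := by field_simp
    _ ≤ (Tmax - TG) * fh k := by nlinarith
    _ = fh k * (Tmax - TG) := by ring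
  have h2 : C14 / (Tmax - ⨆ k, TD k) ≤ ft := by
    have hftp := hft.1
    have : C14 / ft ≤ Tmax - ⨆ k, TD k := by linarith
    rw [div_le_iff₀ hDpos]
    calc C14 = (C14 / ft) * ft := by field_simp
    _ ≤ (Tmax - ⨆ k, TD k) * ft := by nlinarith
    _ = ft * (Tmax - ⨆ k, TD k) := by ring
  have hsum : ∑ k : Fin K, C11 k * (C13 k / (Tmax - TG)) ^ 2
      ≤ ∑ k : Fin K, C11 k * fh k ^ 2 := by
    apply Finset.sum_le_sum
    intro k _
    have hk1 := h1 k
    have hpos : 0 < C13 k / (Tmax - TG) := div_pos (hC13 k) hGpos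
    exact mul_le_mul_of_nonneg_left (pow_le_pow_left₀ hpos.le hk1 2) (hC11 k)
  have hpos2 : 0 < C14 / (Tmax - ⨆ k, TD k) := div_pos hC14 hDpos
  exact add_le_add hsum (mul_le_mul_of_nonneg_left (pow_le_pow_left₀ hpos2.le h2 2) hC12)
end

section
/- Let Q be a positive integer and F : EuclideanSpace ℝ (Fin Q) → ℝ differentiable, L-smooth, and μ-strongly convex with L, μ > 0, attaining its minimum at w*. Let A > 0, σ > 0, ν > 0, ρL ∈ [0,1], ρE = 1 − ρL. Fix a point w (possibly random with E[F(w) − F(w*)] finite and nonnegative). On a probability space let ĝ and gE be random vectors that, conditionally on w, are independent with conditional means both equal to ∇F(w) and conditional second moments E[‖ĝ‖² | w] ≤ A² and E[‖gE‖² | w] ≤ A², and let n̂ be independent of (w, ĝ, gE) with independent mean-zero coordinates of variance σ²/(2ν) each. Define w' = w − (1/μ)(ρL·(ĝ + n̂) + ρE·gE). Then E[F(w') − F(w*)] ≤ (L/(2μ) − 1)·E[F(w) − F(w*)] + (L/(2μ²))·(A² + σ²Q/(2ν)). -/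
open MeasureTheory ProbabilityTheory
open scoped RealInnerProductSpace

set_option maxHeartbeats 2000000 in
/-- **One-round contraction** (equations (B.5)–(B.7) in the proof of Theorem 2):
one SemiFL update in the stable region with learning rate `1/μ` and amplitude
distortion canceled. -/
theorem semifl_one_round_contraction
    (Q : ℕ) (hQ : 0 < Q)
    (F : EuclideanSpace ℝ (Fin Q) → ℝ)
    (hF : Differentiable ℝ F)
    (L μ : ℝ) (hL : 0 < L) (hμ : 0 < μ)
    -- L-smoothness
    (hsmooth : ∀ w w' : EuclideanSpace ℝ (Fin Q),
      F w ≤ F w' + ⟪gradient F w', w - w'⟫ + L / 2 * ‖w - w'‖ ^ 2)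
    -- μ-strong convexity
    (hconv : ∀ w w' : EuclideanSpace ℝ (Fin Q),
      F w' + ⟪gradient F w', w - w'⟫ + μ / 2 * ‖w - w'‖ ^ 2 ≤ F w)
    -- F attains its minimum at w*
    (wstar : EuclideanSpace ℝ (Fin Q))
    (hmin : ∀ w, F wstar ≤ F w)
    (A σ ν ρL ρE : ℝ) (hA : 0 < A) (hσ : 0 < σ) (hν : 0 < ν)
    (hρL : ρL ∈ Set.Icc (0 : ℝ) 1) (hρE : ρE = 1 - ρL)
    {Ω : Type*} [MeasureSpace Ω] [IsProbabilityMeasure (ℙ : Measure Ω)]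
    [StandardBorelSpace Ω]
    -- the (possibly random) current iterate
    (w : Ω → EuclideanSpace ℝ (Fin Q))
    (hw_meas : Measurable w)
    (hw_int : Integrable (fun ω => F (w ω)) ℙ)
    (ghat gE nhat : Ω → EuclideanSpace ℝ (Fin Q))
    (hghat_int : Integrable ghat ℙ) (hgE_int : Integrable gE ℙ)
    (hnhat_int : Integrable nhat ℙ)
    (hghat_sq_int : Integrable (fun ω => ‖ghat ω‖ ^ 2) ℙ)
    (hgE_sq_int : Integrable (fun ω => ‖gE ω‖ ^ 2) ℙ)
    -- conditionally on w, ĝ and gE are independent ...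
    (hcondindep : CondIndepFun (MeasurableSpace.comap w inferInstance) hw_meas.comap_le
      ghat gE ℙ)
    -- ... with conditional means ∇F(w) ...
    (hghat_condmean :
      MeasureTheory.condExp (MeasurableSpace.comap w inferInstance) ℙ ghat
        =ᵐ[ℙ] fun ω => gradient F (w ω))
    (hgE_condmean :
      MeasureTheory.condExp (MeasurableSpace.comap w inferInstance) ℙ gE
        =ᵐ[ℙ] fun ω => gradient F (w ω))
    -- ... and conditional second moments at most A²
    (hghat_condmoment : ∀ᵐ ω ∂ℙ,
      MeasureTheory.condExp (MeasurableSpace.comap w inferInstance) ℙ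
        (fun ω' => ‖ghat ω'‖ ^ 2) ω ≤ A ^ 2)
    (hgE_condmoment : ∀ᵐ ω ∂ℙ,
      MeasureTheory.condExp (MeasurableSpace.comap w inferInstance) ℙ
        (fun ω' => ‖gE ω'‖ ^ 2) ω ≤ A ^ 2)
    -- n̂ is independent of (w, ĝ, gE), with independent mean-zero coordinates of
    -- variance σ²/(2ν)
    (hnhat_indep : IndepFun nhat (fun ω => (w ω, ghat ω, gE ω)) ℙ)
    (hnhat_coords : iIndepFun (fun q ω => nhat ω q) ℙ)
    (hnhat_mean : ∀ q : Fin Q, ∫ ω, nhat ω q ∂ℙ = 0)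
    (hnhat_var : ∀ q : Fin Q, ∫ ω, (nhat ω q) ^ 2 ∂ℙ = σ ^ 2 / (2 * ν))
    -- the updated iterate
    (w' : Ω → EuclideanSpace ℝ (Fin Q))
    (hw' : ∀ ω, w' ω = w ω - (1 / μ) • (ρL • (ghat ω + nhat ω) + ρE • gE ω))
    (hw'_int : Integrable (fun ω => F (w' ω)) ℙ) :
    ∫ ω, (F (w' ω) - F wstar) ∂ℙ
      ≤ (L / (2 * μ) - 1) * ∫ ω, (F (w ω) - F wstar) ∂ℙ
        + (L / (2 * μ ^ 2)) * (A ^ 2 + σ ^ 2 * (Q : ℝ) / (2 * ν)) := by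
    classical
  obtain ⟨hρL0, hρL1⟩ := hρL
  have hρE0 : 0 ≤ ρE := by rw [hρE]; linarith
  have hρsum : ρL + ρE = 1 := by rw [hρE]; ring
  have hm : MeasurableSpace.comap w inferInstance ≤ (MeasureSpace.toMeasurableSpace : MeasurableSpace Ω) := hw_meas.comap_le
  haveI hsig : SigmaFinite (@Measure.trim Ω (MeasurableSpace.comap w inferInstance) MeasureSpace.toMeasurableSpace ℙ hm) := inferInstance
  -- basic Euclidean facts
  have hnormsq : ∀ x : EuclideanSpace ℝ (Fin Q), ‖x‖ ^ 2 = ∑ q, (x q) ^ 2 := by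
    intro x
    rw [EuclideanSpace.norm_eq, Real.sq_sqrt (Finset.sum_nonneg fun i _ => sq_nonneg _)]
    simp [Real.norm_eq_abs, sq_abs]
  have hinner : ∀ x y : EuclideanSpace ℝ (Fin Q), ⟪x, y⟫ = ∑ q, x q * y q := by
    intro x y
    simp [PiLp.inner_apply, RCLike.inner_apply, conj_trivial]
    exact Finset.sum_congr rfl fun _ _ => mul_comm _ _
  have hcoord_sq : ∀ (x : EuclideanSpace ℝ (Fin Q)) (q : Fin Q), (x q) ^ 2 ≤ ‖x‖ ^ 2 := by
    intro x q
    rw [hnormsq]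
    exact Finset.single_le_sum (f := fun i => x i ^ 2) (fun i _ => sq_nonneg _) (Finset.mem_univ q)
  have hq_meas : ∀ q : Fin Q, Measurable (fun x : EuclideanSpace ℝ (Fin Q) => x q) :=
    fun q => (EuclideanSpace.proj (𝕜 := ℝ) q).continuous.measurable
  -- coordinates of integrable vector functions are integrable
  have hcoord_int : ∀ (v : Ω → EuclideanSpace ℝ (Fin Q)), Integrable v ℙ →
      ∀ q, Integrable (fun ω => v ω q) ℙ := by
    intro v hv q
    exact (EuclideanSpace.proj (𝕜 := ℝ) q).integrable_comp hv
  have hcoord_sq_int : ∀ (v : Ω → EuclideanSpace ℝ (Fin Q)), Integrable v ℙ →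
      Integrable (fun ω => ‖v ω‖ ^ 2) ℙ → ∀ q, Integrable (fun ω => (v ω q) ^ 2) ℙ := by
    intro v hv hv2 q
    refine hv2.mono' ?_ ?_
    · have h := (hcoord_int v hv q).aestronglyMeasurable
      simp only [sq]; exact h.mul h
    · filter_upwards with ω
      rw [Real.norm_eq_abs, abs_of_nonneg (sq_nonneg _)]
      exact hcoord_sq _ q
  -- gradient measurability
  have hgradmeas : Measurable (gradient F) := by
    have h1 := measurable_fderiv ℝ F
    exact ((InnerProductSpace.toDual ℝ
      (EuclideanSpace ℝ (Fin Q))).symm.continuous.measurable).comp h1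
  have hXmeas : Measurable (fun ω => gradient F (w ω)) := hgradmeas.comp hw_meas
  have hF_sub_int : Integrable (fun ω => F (w ω) - F wstar) ℙ := hw_int.sub (integrable_const _)
  -- PL inequality and gradient bound
  have hPL : ∀ ω, 2 * μ * (F (w ω) - F wstar) ≤ ‖gradient F (w ω)‖ ^ 2 := by
    intro ω
    have h1 := hconv wstar (w ω)
    have h2 := abs_le.1 (abs_real_inner_le_norm (gradient F (w ω)) (wstar - w ω))
    nlinarith [sq_nonneg (‖gradient F (w ω)‖ - μ * ‖wstar - w ω‖), norm_nonneg (wstar - w ω),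
      norm_nonneg (gradient F (w ω)), h2.1, h2.2]
  have hGB : ∀ x : EuclideanSpace ℝ (Fin Q), ‖gradient F x‖ ^ 2 ≤ 2 * L * (F x - F wstar) := by
    intro x
    have h1 := hsmooth (x - L⁻¹ • gradient F x) x
    have h2 := hmin (x - L⁻¹ • gradient F x)
    have h3 : (x - L⁻¹ • gradient F x) - x = -(L⁻¹ • gradient F x) := by abel
    rw [h3, inner_neg_right, real_inner_smul_right, real_inner_self_eq_norm_sq, norm_neg,
      norm_smul, Real.norm_eq_abs, abs_of_pos (inv_pos.2 hL)] at h1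
    have h5 : L / 2 * (L⁻¹ * ‖gradient F x‖) ^ 2 = ‖gradient F x‖ ^ 2 / (2 * L) := by
      field_simp
    have h6 : L⁻¹ * ‖gradient F x‖ ^ 2 = ‖gradient F x‖ ^ 2 / L := by field_simp
    have h8 : ‖gradient F x‖ ^ 2 / L = 2 * (‖gradient F x‖ ^ 2 / (2 * L)) := by
      field_simp
    have h7 : ‖gradient F x‖ ^ 2 / (2 * L) ≤ F x - F wstar := by
      rw [h5, h6] at h1
      have h9 := h2.trans h1
      linarith [h8]
    calc ‖gradient F x‖ ^ 2 = (2 * L) * (‖gradient F x‖ ^ 2 / (2 * L)) := by field_simp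
      _ ≤ (2 * L) * (F x - F wstar) :=
          mul_le_mul_of_nonneg_left h7 (by positivity)
      _ = 2 * L * (F x - F wstar) := by ring
  have hXsq_int : Integrable (fun ω => ‖gradient F (w ω)‖ ^ 2) ℙ := by
    refine (hF_sub_int.const_mul (2 * L)).mono'
      ((hXmeas.norm.pow_const 2).aestronglyMeasurable) ?_
    filter_upwards with ω
    rw [Real.norm_eq_abs, abs_of_nonneg (sq_nonneg _)]
    exact hGB (w ω)
  have hX_int : Integrable (fun ω => gradient F (w ω)) ℙ := by
    refine ((hXsq_int.add (integrable_const 1)).div_const 2).mono'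
      hXmeas.aestronglyMeasurable ?_
    filter_upwards with ω
    simp only [Pi.add_apply]
    nlinarith [sq_nonneg (‖gradient F (w ω)‖ - 1), norm_nonneg (gradient F (w ω))]
  -- integrability of inner products
  have hinner_int : ∀ (u v : Ω → EuclideanSpace ℝ (Fin Q)),
      AEStronglyMeasurable u ℙ → AEStronglyMeasurable v ℙ →
      Integrable (fun ω => ‖u ω‖ ^ 2) ℙ → Integrable (fun ω => ‖v ω‖ ^ 2) ℙ →
      Integrable (fun ω => ⟪u ω, v ω⟫) ℙ := by
    intro u v hu hv hu2 hv2
    refine ((hu2.add hv2).div_const 2).mono' (hu.inner hv) ?_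
    filter_upwards with ω
    simp only [Pi.add_apply]
    have h := abs_real_inner_le_norm (u ω) (v ω)
    rw [Real.norm_eq_abs]
    nlinarith [sq_nonneg (‖u ω‖ - ‖v ω‖), norm_nonneg (u ω), norm_nonneg (v ω)]
  -- noise second moment facts
  have hnhat_q_sq_int : ∀ q, Integrable (fun ω => (nhat ω q) ^ 2) ℙ := by
    intro q
    by_contra h
    have h2 := hnhat_var q
    rw [integral_undef h] at h2
    have : 0 < σ ^ 2 / (2 * ν) := by positivity
    linarith [this.trans_eq h2.symm] -- contradiction
  have hnhat_normsq : (fun ω => ‖nhat ω‖ ^ 2) = fun ω => ∑ q, (nhat ω q) ^ 2 :=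
    funext fun ω => hnormsq _
  have hnhat_sq_int : Integrable (fun ω => ‖nhat ω‖ ^ 2) ℙ := by
    rw [hnhat_normsq]
    exact integrable_finset_sum _ fun q _ => hnhat_q_sq_int q
  have hnhat_sq_integral : ∫ ω, ‖nhat ω‖ ^ 2 ∂ℙ = σ ^ 2 * Q / (2 * ν) := by
    rw [hnhat_normsq, integral_finset_sum _ fun q _ => hnhat_q_sq_int q]
    simp only [hnhat_var, Finset.sum_const, Finset.card_univ, Fintype.card_fin, nsmul_eq_mul]
    ring
  -- independence: zero cross terms
  have hzero : ∀ (φ : (EuclideanSpace ℝ (Fin Q) × EuclideanSpace ℝ (Fin Q) ×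
      EuclideanSpace ℝ (Fin Q)) → ℝ), Measurable φ →
      Integrable (fun ω => φ (w ω, ghat ω, gE ω)) ℙ → ∀ q : Fin Q,
      (Integrable (fun ω => φ (w ω, ghat ω, gE ω) * nhat ω q) ℙ ∧
        ∫ ω, φ (w ω, ghat ω, gE ω) * nhat ω q ∂ℙ = 0) := by
    intro φ hφ hint q
    have hindep : IndepFun (fun ω => φ (w ω, ghat ω, gE ω)) (fun ω => nhat ω q) ℙ :=
      (hnhat_indep.comp (hq_meas q) hφ).symm
    have hnq : Integrable (fun ω => nhat ω q) ℙ := hcoord_int nhat hnhat_int q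
    refine ⟨hindep.integrable_mul hint hnq, ?_⟩
    have h := hindep.integral_mul_eq_mul_integral hint.aestronglyMeasurable hnq.aestronglyMeasurable
    calc ∫ ω, φ (w ω, ghat ω, gE ω) * nhat ω q ∂ℙ
        = (∫ ω, φ (w ω, ghat ω, gE ω) ∂ℙ) * ∫ ω, nhat ω q ∂ℙ := h
      _ = 0 := by rw [hnhat_mean q, mul_zero]
  -- ∫⟪∇F(w), n̂⟫ = 0
  have hXn : ∫ ω, ⟪gradient F (w ω), nhat ω⟫ ∂ℙ = 0 := by
    have hφ : ∀ q : Fin Q, Measurable (fun p : (EuclideanSpace ℝ (Fin Q) ×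
        EuclideanSpace ℝ (Fin Q) × EuclideanSpace ℝ (Fin Q)) => gradient F p.1 q) :=
      fun q => (hq_meas q).comp (hgradmeas.comp measurable_fst)
    have hintq : ∀ q : Fin Q, Integrable (fun ω => gradient F (w ω) q) ℙ :=
      fun q => hcoord_int _ hX_int q
    simp_rw [hinner]
    rw [integral_finset_sum _ fun q _ => (hzero _ (hφ q) (hintq q) q).1]
    exact Finset.sum_eq_zero fun q _ => (hzero _ (hφ q) (hintq q) q).2
  -- ∫⟪a, n̂⟫ = 0 where a = ρL•ĝ + ρE•gE
  have haeq : ∀ ω q, (ρL • ghat ω + ρE • gE ω) q = ρL * ghat ω q + ρE * gE ω q := by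
    intro ω q; rfl
  have han : ∫ ω, ⟪ρL • ghat ω + ρE • gE ω, nhat ω⟫ ∂ℙ = 0 := by
    have hφ : ∀ q : Fin Q, Measurable (fun p : (EuclideanSpace ℝ (Fin Q) ×
        EuclideanSpace ℝ (Fin Q) × EuclideanSpace ℝ (Fin Q)) =>
          ρL * p.2.1 q + ρE * p.2.2 q) := fun q =>
      (((hq_meas q).comp (measurable_fst.comp measurable_snd)).const_mul ρL).add
        (((hq_meas q).comp (measurable_snd.comp measurable_snd)).const_mul ρE)
    have hintq : ∀ q : Fin Q, Integrable (fun ω => ρL * ghat ω q + ρE * gE ω q) ℙ :=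
      fun q => ((hcoord_int ghat hghat_int q).const_mul ρL).add
        ((hcoord_int gE hgE_int q).const_mul ρE)
    simp_rw [hinner, haeq]
    rw [integral_finset_sum _ fun q _ => (hzero _ (hφ q) (hintq q) q).1]
    exact Finset.sum_eq_zero fun q _ => (hzero _ (hφ q) (hintq q) q).2
  -- conditional mean: ∫⟪∇F(w), v⟫ = ∫‖∇F(w)‖² for v with condexp = ∇F(w)
  have hwm : Measurable[MeasurableSpace.comap w inferInstance] w :=
    fun s hs => ⟨s, hs, rfl⟩
  have hXq_sm : ∀ q, StronglyMeasurable[MeasurableSpace.comap w inferInstance] (fun ω => gradient F (w ω) q) := by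
    intro q
    exact (((hq_meas q).comp hgradmeas).comp hwm).stronglyMeasurable
  have hcondmean_integral : ∀ (v : Ω → EuclideanSpace ℝ (Fin Q)), Integrable v ℙ →
      Integrable (fun ω => ‖v ω‖ ^ 2) ℙ →
      (MeasureTheory.condExp (MeasurableSpace.comap w inferInstance) ℙ v =ᵐ[ℙ] fun ω => gradient F (w ω)) →
      ∫ ω, ⟪gradient F (w ω), v ω⟫ ∂ℙ = ∫ ω, ‖gradient F (w ω)‖ ^ 2 ∂ℙ := by
    intro v hv hv2 hmean
    have hcondq : ∀ q, (fun ω => gradient F (w ω) q) =ᵐ[ℙ]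
        MeasureTheory.condExp (MeasurableSpace.comap w inferInstance) ℙ (fun ω => v ω q) := by
      intro q
      refine ae_eq_condExp_of_forall_setIntegral_eq hm (hcoord_int v hv q)
        (fun s _ _ => (hcoord_int _ hX_int q).integrableOn) ?_
        ((hXq_sm q).aestronglyMeasurable)
      intro s hs hμs
      have h1 : ∫ ω in s, v ω q ∂ℙ =
          (EuclideanSpace.proj (𝕜 := ℝ) q) (∫ ω in s, v ω ∂ℙ) :=
        (EuclideanSpace.proj (𝕜 := ℝ) q).integral_comp_comm hv.integrableOn
      have h2 : ∫ ω in s, gradient F (w ω) q ∂ℙ =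
          (EuclideanSpace.proj (𝕜 := ℝ) q) (∫ ω in s, gradient F (w ω) ∂ℙ) :=
        (EuclideanSpace.proj (𝕜 := ℝ) q).integral_comp_comm hX_int.integrableOn
      have h3 : ∫ ω in s, gradient F (w ω) ∂ℙ = ∫ ω in s, v ω ∂ℙ := by
        have h4 : ∫ ω in s, (MeasureTheory.condExp (MeasurableSpace.comap w inferInstance) ℙ v) ω ∂ℙ = ∫ ω in s, v ω ∂ℙ :=
          setIntegral_condExp hm hv hs
        rw [← h4]
        exact setIntegral_congr_ae (hm s hs) (hmean.mono fun ω hω _ => hω.symm)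
      rw [h1, h2, h3]
    have hXv_int : ∀ q, Integrable (fun ω => gradient F (w ω) q * v ω q) ℙ := by
      intro q
      refine ((hXsq_int.add hv2).div_const 2).mono'
        (((hcoord_int _ hX_int q).aestronglyMeasurable).mul
          ((hcoord_int v hv q).aestronglyMeasurable)) ?_
      filter_upwards with ω
      simp only [Pi.add_apply]
      rw [Real.norm_eq_abs, abs_mul]
      have h1 := hcoord_sq (gradient F (w ω)) q
      have h2 := hcoord_sq (v ω) q
      nlinarith [sq_nonneg (|gradient F (w ω) q| - |v ω q|), sq_abs (gradient F (w ω) q),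
        sq_abs (v ω q), abs_nonneg (gradient F (w ω) q), abs_nonneg (v ω q)]
    have hint_q : ∀ q, ∫ ω, gradient F (w ω) q * v ω q ∂ℙ =
        ∫ ω, (gradient F (w ω) q) ^ 2 ∂ℙ := by
      intro q
      have h1 : MeasureTheory.condExp (MeasurableSpace.comap w inferInstance) ℙ
            ((fun ω => gradient F (w ω) q) * fun ω => v ω q) =ᵐ[ℙ]
          (fun ω => gradient F (w ω) q) * MeasureTheory.condExp (MeasurableSpace.comap w inferInstance) ℙ (fun ω => v ω q) :=
        condExp_mul_of_stronglyMeasurable_left (hXq_sm q) (hXv_int q) (hcoord_int v hv q)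
      have h2 : ∫ ω, (MeasureTheory.condExp (MeasurableSpace.comap w inferInstance) ℙ
            ((fun ω => gradient F (w ω) q) * fun ω => v ω q)) ω ∂ℙ =
          ∫ ω, gradient F (w ω) q * v ω q ∂ℙ := integral_condExp hm
      rw [← h2, integral_congr_ae (h1.mono fun ω h => h)]
      refine integral_congr_ae ?_
      filter_upwards [hcondq q] with ω hω
      simp only [Pi.mul_apply]
      rw [← hω]
      ring
    calc ∫ ω, ⟪gradient F (w ω), v ω⟫ ∂ℙ
        = ∫ ω, ∑ q, gradient F (w ω) q * v ω q ∂ℙ := by simp_rw [hinner]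
      _ = ∑ q, ∫ ω, gradient F (w ω) q * v ω q ∂ℙ :=
          integral_finset_sum _ fun q _ => hXv_int q
      _ = ∑ q, ∫ ω, (gradient F (w ω) q) ^ 2 ∂ℙ := Finset.sum_congr rfl fun q _ => hint_q q
      _ = ∫ ω, ∑ q, (gradient F (w ω) q) ^ 2 ∂ℙ :=
          (integral_finset_sum _ fun q _ => hcoord_sq_int _ hX_int hXsq_int q).symm
      _ = ∫ ω, ‖gradient F (w ω)‖ ^ 2 ∂ℙ := by simp_rw [← hnormsq]
  -- Jensen bound for the convex combination
  have hJensen : ∀ u v : EuclideanSpace ℝ (Fin Q),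
      ‖ρL • u + ρE • v‖ ^ 2 ≤ ρL * ‖u‖ ^ 2 + ρE * ‖v‖ ^ 2 := by
    intro u v
    have h1 : ‖ρL • u + ρE • v‖ ≤ ρL * ‖u‖ + ρE * ‖v‖ := by
      calc ‖ρL • u + ρE • v‖ ≤ ‖ρL • u‖ + ‖ρE • v‖ := norm_add_le _ _
        _ = ρL * ‖u‖ + ρE * ‖v‖ := by
            rw [norm_smul, norm_smul, Real.norm_eq_abs, Real.norm_eq_abs,
              abs_of_nonneg hρL0, abs_of_nonneg hρE0]
    nlinarith [mul_self_le_mul_self (norm_nonneg (ρL • u + ρE • v)) h1,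
      sq_nonneg (‖u‖ - ‖v‖), mul_nonneg hρL0 hρE0, norm_nonneg u, norm_nonneg v]
  -- integrability of the combination a and its square
  have ha_asm : AEStronglyMeasurable (fun ω => ρL • ghat ω + ρE • gE ω) ℙ :=
    (hghat_int.aestronglyMeasurable.const_smul ρL).add
      (hgE_int.aestronglyMeasurable.const_smul ρE)
  have ha_sq_int : Integrable (fun ω => ‖ρL • ghat ω + ρE • gE ω‖ ^ 2) ℙ := by
    refine ((hghat_sq_int.const_mul ρL).add (hgE_sq_int.const_mul ρE)).mono'
      ((continuous_pow 2).comp_aestronglyMeasurable ha_asm.norm) ?_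
    filter_upwards with ω
    rw [Real.norm_eq_abs, abs_of_nonneg (sq_nonneg _)]
    exact hJensen _ _
  -- conditional second moments give second moment bounds
  have hghat_sq_le : ∫ ω, ‖ghat ω‖ ^ 2 ∂ℙ ≤ A ^ 2 := by
    rw [← integral_condExp hm (f := fun ω => ‖ghat ω‖ ^ 2)]
    calc ∫ ω, (MeasureTheory.condExp (MeasurableSpace.comap w inferInstance) ℙ fun ω' => ‖ghat ω'‖ ^ 2) ω ∂ℙ
        ≤ ∫ _ω, A ^ 2 ∂ℙ :=
          integral_mono_ae integrable_condExp (integrable_const _) hghat_condmoment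
      _ = A ^ 2 := by simp
  have hgE_sq_le : ∫ ω, ‖gE ω‖ ^ 2 ∂ℙ ≤ A ^ 2 := by
    rw [← integral_condExp hm (f := fun ω => ‖gE ω‖ ^ 2)]
    calc ∫ ω, (MeasureTheory.condExp (MeasurableSpace.comap w inferInstance) ℙ fun ω' => ‖gE ω'‖ ^ 2) ω ∂ℙ
        ≤ ∫ _ω, A ^ 2 ∂ℙ :=
          integral_mono_ae integrable_condExp (integrable_const _) hgE_condmoment
      _ = A ^ 2 := by simp
  have ha_sq_le : ∫ ω, ‖ρL • ghat ω + ρE • gE ω‖ ^ 2 ∂ℙ ≤ A ^ 2 := by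
    calc ∫ ω, ‖ρL • ghat ω + ρE • gE ω‖ ^ 2 ∂ℙ
        ≤ ∫ ω, (ρL * ‖ghat ω‖ ^ 2 + ρE * ‖gE ω‖ ^ 2) ∂ℙ :=
          integral_mono ha_sq_int
            ((hghat_sq_int.const_mul ρL).add (hgE_sq_int.const_mul ρE))
            (fun ω => hJensen _ _)
      _ = ρL * ∫ ω, ‖ghat ω‖ ^ 2 ∂ℙ + ρE * ∫ ω, ‖gE ω‖ ^ 2 ∂ℙ := by
          rw [integral_add (hghat_sq_int.const_mul ρL) (hgE_sq_int.const_mul ρE),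
            integral_const_mul, integral_const_mul]
      _ ≤ ρL * A ^ 2 + ρE * A ^ 2 :=
          add_le_add (mul_le_mul_of_nonneg_left hghat_sq_le hρL0)
            (mul_le_mul_of_nonneg_left hgE_sq_le hρE0)
      _ = A ^ 2 := by rw [hρE]; ring
  -- the effective update direction
  have hgfun : ∀ ω, ρL • (ghat ω + nhat ω) + ρE • gE ω =
      (ρL • ghat ω + ρE • gE ω) + ρL • nhat ω := by
    intro ω; rw [smul_add]; abel
  have hg_asm : AEStronglyMeasurable
      (fun ω => (ρL • ghat ω + ρE • gE ω) + ρL • nhat ω) ℙ :=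
    ha_asm.add (hnhat_int.aestronglyMeasurable.const_smul ρL)
  have hg_expand : ∀ ω, ‖(ρL • ghat ω + ρE • gE ω) + ρL • nhat ω‖ ^ 2 =
      ‖ρL • ghat ω + ρE • gE ω‖ ^ 2 +
        2 * ρL * ⟪ρL • ghat ω + ρE • gE ω, nhat ω⟫ + ρL ^ 2 * ‖nhat ω‖ ^ 2 := by
    intro ω
    rw [norm_add_sq_real, real_inner_smul_right, norm_smul, Real.norm_eq_abs, mul_pow, sq_abs]
    ring
  have han_int : Integrable (fun ω => ⟪ρL • ghat ω + ρE • gE ω, nhat ω⟫) ℙ :=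
    hinner_int _ _ ha_asm hnhat_int.aestronglyMeasurable ha_sq_int hnhat_sq_int
  have hg_sq_int : Integrable
      (fun ω => ‖(ρL • ghat ω + ρE • gE ω) + ρL • nhat ω‖ ^ 2) ℙ := by
    have h : (fun ω => ‖(ρL • ghat ω + ρE • gE ω) + ρL • nhat ω‖ ^ 2) =
        fun ω => ‖ρL • ghat ω + ρE • gE ω‖ ^ 2 +
          2 * ρL * ⟪ρL • ghat ω + ρE • gE ω, nhat ω⟫ + ρL ^ 2 * ‖nhat ω‖ ^ 2 :=
      funext hg_expand
    rw [h]
    exact (ha_sq_int.add (han_int.const_mul _)).add (hnhat_sq_int.const_mul _)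
  have hG : ∫ ω, ‖(ρL • ghat ω + ρE • gE ω) + ρL • nhat ω‖ ^ 2 ∂ℙ ≤
      A ^ 2 + σ ^ 2 * Q / (2 * ν) := by
    have h : ∫ ω, ‖(ρL • ghat ω + ρE • gE ω) + ρL • nhat ω‖ ^ 2 ∂ℙ =
        ∫ ω, ‖ρL • ghat ω + ρE • gE ω‖ ^ 2 ∂ℙ +
          2 * ρL * ∫ ω, ⟪ρL • ghat ω + ρE • gE ω, nhat ω⟫ ∂ℙ +
          ρL ^ 2 * ∫ ω, ‖nhat ω‖ ^ 2 ∂ℙ := by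
      have j2 : Integrable (fun ω => 2 * ρL * ⟪ρL • ghat ω + ρE • gE ω, nhat ω⟫) ℙ :=
        han_int.const_mul _
      have j12 : Integrable (fun ω => ‖ρL • ghat ω + ρE • gE ω‖ ^ 2 +
          2 * ρL * ⟪ρL • ghat ω + ρE • gE ω, nhat ω⟫) ℙ := ha_sq_int.add j2
      have j3 : Integrable (fun ω => ρL ^ 2 * ‖nhat ω‖ ^ 2) ℙ := hnhat_sq_int.const_mul _
      simp_rw [hg_expand]
      rw [integral_add j12 j3, integral_add ha_sq_int j2, integral_const_mul, integral_const_mul]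
    rw [h, han, hnhat_sq_integral, mul_zero, add_zero]
    have hρLsq : ρL ^ 2 ≤ 1 := by nlinarith
    have hvar_nonneg : 0 ≤ σ ^ 2 * Q / (2 * ν) := by positivity
    nlinarith [ha_sq_le]
  -- ∫⟪∇F(w), g⟫ = ∫‖∇F(w)‖²
  have hXg_inner_int : ∀ (v : Ω → EuclideanSpace ℝ (Fin Q)), AEStronglyMeasurable v ℙ →
      Integrable (fun ω => ‖v ω‖ ^ 2) ℙ →
      Integrable (fun ω => ⟪gradient F (w ω), v ω⟫) ℙ :=
    fun v hv hv2 => hinner_int _ _ hXmeas.aestronglyMeasurable hv hXsq_int hv2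
  have hP : ∫ ω, ⟪gradient F (w ω), (ρL • ghat ω + ρE • gE ω) + ρL • nhat ω⟫ ∂ℙ =
      ∫ ω, ‖gradient F (w ω)‖ ^ 2 ∂ℙ := by
    have e1 : ∀ ω, ⟪gradient F (w ω), (ρL • ghat ω + ρE • gE ω) + ρL • nhat ω⟫ =
        ρL * ⟪gradient F (w ω), ghat ω⟫ +
          (ρE * ⟪gradient F (w ω), gE ω⟫ + ρL * ⟪gradient F (w ω), nhat ω⟫) := by
      intro ω
      simp only [inner_add_right, real_inner_smul_right]
      ring
    have i1 : Integrable (fun ω => ⟪gradient F (w ω), ghat ω⟫) ℙ :=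
      hXg_inner_int ghat hghat_int.aestronglyMeasurable hghat_sq_int
    have i2 : Integrable (fun ω => ⟪gradient F (w ω), gE ω⟫) ℙ :=
      hXg_inner_int gE hgE_int.aestronglyMeasurable hgE_sq_int
    have i3 : Integrable (fun ω => ⟪gradient F (w ω), nhat ω⟫) ℙ :=
      hXg_inner_int nhat hnhat_int.aestronglyMeasurable hnhat_sq_int
    have j1 : Integrable (fun ω => ρL * ⟪gradient F (w ω), ghat ω⟫) ℙ := i1.const_mul ρL
    have j2 : Integrable (fun ω => ρE * ⟪gradient F (w ω), gE ω⟫) ℙ := i2.const_mul ρE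
    have j3 : Integrable (fun ω => ρL * ⟪gradient F (w ω), nhat ω⟫) ℙ := i3.const_mul ρL
    have j23 : Integrable (fun ω => ρE * ⟪gradient F (w ω), gE ω⟫ +
        ρL * ⟪gradient F (w ω), nhat ω⟫) ℙ := j2.add j3
    simp_rw [e1]
    rw [integral_add j1 j23, integral_add j2 j3,
      integral_const_mul, integral_const_mul, integral_const_mul,
      hcondmean_integral ghat hghat_int hghat_sq_int hghat_condmean,
      hcondmean_integral gE hgE_int hgE_sq_int hgE_condmean, hXn, mul_zero, add_zero,
      ← add_mul, hρsum, one_mul]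
  -- pointwise smoothness bound
  have hpt : ∀ ω, F (w' ω) - F wstar ≤ (F (w ω) - F wstar) -
      (1 / μ) * ⟪gradient F (w ω), (ρL • ghat ω + ρE • gE ω) + ρL • nhat ω⟫ +
      (L / (2 * μ ^ 2)) * ‖(ρL • ghat ω + ρE • gE ω) + ρL • nhat ω‖ ^ 2 := by
    intro ω
    have h1 := hsmooth (w' ω) (w ω)
    have h2 : w' ω - w ω = -((1 / μ) • ((ρL • ghat ω + ρE • gE ω) + ρL • nhat ω)) := by
      rw [hw' ω, hgfun ω]; abel
    rw [h2, inner_neg_right, real_inner_smul_right, norm_neg, norm_smul, Real.norm_eq_abs,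
      abs_of_pos (by positivity : (0:ℝ) < 1 / μ)] at h1
    have h3 : L / 2 * ((1 / μ) * ‖(ρL • ghat ω + ρE • gE ω) + ρL • nhat ω‖) ^ 2 =
        (L / (2 * μ ^ 2)) * ‖(ρL • ghat ω + ρE • gE ω) + ρL • nhat ω‖ ^ 2 := by
      field_simp
    linarith [h1, h3.symm.le, h3.le]
  -- integrate
  have hXg_int : Integrable
      (fun ω => ⟪gradient F (w ω), (ρL • ghat ω + ρE • gE ω) + ρL • nhat ω⟫) ℙ :=
    hXg_inner_int _ hg_asm hg_sq_int
  have hRHS_int : Integrable (fun ω => (F (w ω) - F wstar) -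
      (1 / μ) * ⟪gradient F (w ω), (ρL • ghat ω + ρE • gE ω) + ρL • nhat ω⟫ +
      (L / (2 * μ ^ 2)) * ‖(ρL • ghat ω + ρE • gE ω) + ρL • nhat ω‖ ^ 2) ℙ :=
    (hF_sub_int.sub (hXg_int.const_mul _)).add (hg_sq_int.const_mul _)
  have hstep1 : ∫ ω, (F (w' ω) - F wstar) ∂ℙ ≤
      ∫ ω, ((F (w ω) - F wstar) -
        (1 / μ) * ⟪gradient F (w ω), (ρL • ghat ω + ρE • gE ω) + ρL • nhat ω⟫ +
        (L / (2 * μ ^ 2)) * ‖(ρL • ghat ω + ρE • gE ω) + ρL • nhat ω‖ ^ 2) ∂ℙ :=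
    integral_mono (hw'_int.sub (integrable_const _)) hRHS_int fun ω => hpt ω
  have hstep2 : ∫ ω, ((F (w ω) - F wstar) -
      (1 / μ) * ⟪gradient F (w ω), (ρL • ghat ω + ρE • gE ω) + ρL • nhat ω⟫ +
      (L / (2 * μ ^ 2)) * ‖(ρL • ghat ω + ρE • gE ω) + ρL • nhat ω‖ ^ 2) ∂ℙ =
      (∫ ω, (F (w ω) - F wstar) ∂ℙ) -
        (1 / μ) * ∫ ω, ⟪gradient F (w ω), (ρL • ghat ω + ρE • gE ω) + ρL • nhat ω⟫ ∂ℙ +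
        (L / (2 * μ ^ 2)) *
          ∫ ω, ‖(ρL • ghat ω + ρE • gE ω) + ρL • nhat ω‖ ^ 2 ∂ℙ := by
    have k3 : Integrable (fun ω => (1 / μ) *
        ⟪gradient F (w ω), (ρL • ghat ω + ρE • gE ω) + ρL • nhat ω⟫) ℙ :=
      hXg_int.const_mul _
    have k1 : Integrable (fun ω => (F (w ω) - F wstar) - (1 / μ) *
        ⟪gradient F (w ω), (ρL • ghat ω + ρE • gE ω) + ρL • nhat ω⟫) ℙ :=
      hF_sub_int.sub k3
    have k2 : Integrable (fun ω => (L / (2 * μ ^ 2)) *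
        ‖(ρL • ghat ω + ρE • gE ω) + ρL • nhat ω‖ ^ 2) ℙ := hg_sq_int.const_mul _
    rw [integral_add k1 k2, integral_sub hF_sub_int k3, integral_const_mul, integral_const_mul]
  have hI0 : 0 ≤ ∫ ω, (F (w ω) - F wstar) ∂ℙ :=
    integral_nonneg fun ω => sub_nonneg.2 (hmin _)
  have hS : 2 * μ * ∫ ω, (F (w ω) - F wstar) ∂ℙ ≤ ∫ ω, ‖gradient F (w ω)‖ ^ 2 ∂ℙ := by
    have h := integral_mono (hF_sub_int.const_mul (2 * μ)) hXsq_int fun ω => hPL ω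
    rwa [integral_const_mul] at h
  have hfinal := hstep1.trans_eq hstep2
  rw [hP] at hfinal
  have hμ2 : (0:ℝ) < L / (2 * μ ^ 2) := by positivity
  have hc : (0:ℝ) ≤ L / (2 * μ) := by positivity
  have h10 : (1 / μ) * (2 * μ * ∫ ω, (F (w ω) - F wstar) ∂ℙ) ≤
      (1 / μ) * ∫ ω, ‖gradient F (w ω)‖ ^ 2 ∂ℙ :=
    mul_le_mul_of_nonneg_left hS (by positivity)
  have e2 : (1 / μ) * (2 * μ * ∫ ω, (F (w ω) - F wstar) ∂ℙ) =
      2 * ∫ ω, (F (w ω) - F wstar) ∂ℙ := by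
    field_simp
  have h12 : (L / (2 * μ ^ 2)) * ∫ ω, ‖(ρL • ghat ω + ρE • gE ω) + ρL • nhat ω‖ ^ 2 ∂ℙ ≤
      (L / (2 * μ ^ 2)) * (A ^ 2 + σ ^ 2 * Q / (2 * ν)) :=
    mul_le_mul_of_nonneg_left hG hμ2.le
  have h13 : -(∫ ω, (F (w ω) - F wstar) ∂ℙ) ≤
      (L / (2 * μ) - 1) * ∫ ω, (F (w ω) - F wstar) ∂ℙ := by
    nlinarith [mul_nonneg hc hI0]
  linarith [hfinal, h10, e2, h12, h13]
end

section
/- Let σ² > 0. The function h : (0, ∞) → ℝ defined by h(ζ) = ζ / log(1 + ζ/σ²) (with log the natural logarithm) is strictly monotonically increasing and concave on (0, ∞). -/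
open Real Set

private lemma aux_logA {x : ℝ} (hx : 0 < x) : x / (1 + x) < Real.log (1 + x) := by
  have h1 : (0:ℝ) < 1 + x := by linarith
  rw [Real.lt_log_iff_exp_lt h1]
  have ht : -(x / (1 + x)) ≠ 0 := by
    have : 0 < x / (1 + x) := by positivity
    linarith
  have h := Real.add_one_lt_exp ht
  have h2 : (1:ℝ) / (1 + x) < Real.exp (-(x / (1 + x))) := by
    have he : -(x / (1 + x)) + 1 = 1 / (1 + x) := by field_simp; ring
    linarith
  rw [Real.exp_neg] at h2
  have hp : (0:ℝ) < Real.exp (x / (1 + x)) := Real.exp_pos _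
  rw [one_div, inv_lt_inv₀ (by positivity) hp] at h2
  exact h2

private lemma aux_logB {x : ℝ} (hx : 0 < x) : 2 * x ≤ (2 + x) * Real.log (1 + x) := by
  set φ : ℝ → ℝ := fun t => (2 + t) * Real.log (1 + t) - 2 * t with hφ
  have hder : ∀ t : ℝ, 0 < t → HasDerivAt φ (Real.log (1 + t) - t / (1 + t)) t := by
    intro t ht
    have h1 : (0:ℝ) < 1 + t := by linarith
    have hlt : HasDerivAt (fun s : ℝ => Real.log (1 + s)) (1 / (1 + t)) t := by
      have := ((hasDerivAt_id t).const_add 1).log h1.ne'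
      simpa using this
    have := (((hasDerivAt_id t).const_add 2).mul hlt).sub ((hasDerivAt_id t).const_mul 2)
    refine this.congr_deriv ?_
    simp only [id]
    field_simp
    ring
  have hcont : ContinuousOn φ (Ici 0) := by
    apply ContinuousOn.sub
    · exact (continuousOn_const.add continuousOn_id).mul
        ((continuousOn_const.add continuousOn_id).log (fun t ht => by
          simp only [mem_Ici] at ht; show (1:ℝ) + t ≠ 0; positivity))
    · exact continuousOn_const.mul continuousOn_id
  have hmono : StrictMonoOn φ (Ici 0) := by
    apply strictMonoOn_of_deriv_pos (convex_Ici 0) hcont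
    intro t ht
    rw [interior_Ici] at ht
    rw [(hder t ht).deriv]
    have := aux_logA ht
    linarith
  have h0 : φ 0 = 0 := by simp [hφ]
  have := hmono (self_mem_Ici) (le_of_lt hx : (0:ℝ) ≤ x) hx
  rw [h0] at this
  simp only [hφ] at this
  linarith

section Main

variable {c : ℝ}

private lemma aux_L1 (hc : 0 < c) {x : ℝ} (hx : 0 < x) : (1:ℝ) < 1 + x / c := by
  have : 0 < x / c := by positivity
  linarith

private lemma aux_Lpos (hc : 0 < c) {x : ℝ} (hx : 0 < x) : 0 < Real.log (1 + x / c) :=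
  Real.log_pos (aux_L1 hc hx)

private lemma aux_hL (hc : 0 < c) {x : ℝ} (hx : 0 < x) :
    HasDerivAt (fun t : ℝ => Real.log (1 + t / c)) (1 / (c + x)) x := by
  have h1 : (0:ℝ) < 1 + x / c := by
    have : 0 < x / c := by positivity
    linarith
  have := (((hasDerivAt_id x).div_const c).const_add 1).log h1.ne'
  convert this using 1
  all_goals simp only [id]
  field_simp

private lemma aux_hf (hc : 0 < c) {x : ℝ} (hx : 0 < x) :
    HasDerivAt (fun t : ℝ => t / Real.log (1 + t / c))
      ((Real.log (1 + x / c) - x / (c + x)) / (Real.log (1 + x / c)) ^ 2) x := by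
  have hL := aux_Lpos hc hx
  have := (hasDerivAt_id x).div (aux_hL hc hx) hL.ne'
  have hcx : (0:ℝ) < c + x := by linarith
  refine this.congr_deriv ?_
  rw [div_eq_div_iff (by positivity) (by positivity)]
  field_simp
  rfl

private lemma aux_hf' (hc : 0 < c) {x : ℝ} (hx : 0 < x) :
    HasDerivAt (fun t : ℝ => (Real.log (1 + t / c) - t / (c + t)) / (Real.log (1 + t / c)) ^ 2)
      ((2 * x - (2 * c + x) * Real.log (1 + x / c)) /
        ((c + x) ^ 2 * (Real.log (1 + x / c)) ^ 3)) x := by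
  have hL := aux_Lpos hc hx
  have hcx : (0:ℝ) < c + x := by linarith
  have hN : HasDerivAt (fun t : ℝ => Real.log (1 + t / c) - t / (c + t))
      (1 / (c + x) - (1 * (c + x) - x * 1) / (c + x) ^ 2) x := by
    exact (aux_hL hc hx).sub ((hasDerivAt_id x).div ((hasDerivAt_id x).const_add c) hcx.ne')
  have hD : HasDerivAt (fun t : ℝ => (Real.log (1 + t / c)) ^ 2)
      (2 * (Real.log (1 + x / c)) ^ 1 * (1 / (c + x))) x := by
    simpa using (aux_hL hc hx).fun_pow 2
  have hD0 : ((Real.log (1 + x / c)) ^ 2) ≠ 0 := by positivity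
  have := hN.div hD hD0
  set L := Real.log (1 + x / c) with hLdef
  refine this.congr_deriv ?_
  rw [div_eq_div_iff (by positivity) (by positivity)]
  field_simp
  ring

end Main

/-- The per-device uploading-energy function `h(ζ) = ζ / log(1 + ζ/σ²)` is strictly
monotonically increasing and concave on `(0, ∞)` (Section IV-A of the paper). -/
theorem uploading_energy_strictMono_concave
    (σ2 : ℝ) (hσ2 : 0 < σ2) :
    StrictMonoOn (fun ζ : ℝ => ζ / Real.log (1 + ζ / σ2)) (Set.Ioi 0) ∧
    ConcaveOn ℝ (Set.Ioi 0) (fun ζ : ℝ => ζ / Real.log (1 + ζ / σ2)) := by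
  have hcont : ContinuousOn (fun ζ : ℝ => ζ / Real.log (1 + ζ / σ2)) (Set.Ioi 0) :=
    fun x hx => ((aux_hf hσ2 (mem_Ioi.mp hx)).continuousAt).continuousWithinAt
  have key : ∀ x : ℝ, 0 < x → x / (σ2 + x) < Real.log (1 + x / σ2) := by
    intro x hx
    have hA := aux_logA (x := x / σ2) (by positivity)
    have he : x / σ2 / (1 + x / σ2) = x / (σ2 + x) := by
      rw [div_div]
      congr 1
      field_simp
    rwa [he] at hA
  constructor
  · apply strictMonoOn_of_deriv_pos (convex_Ioi 0) hcont
    intro x hx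
    rw [interior_Ioi] at hx
    replace hx : 0 < x := hx
    rw [(aux_hf hσ2 hx).deriv]
    have hL := aux_Lpos hσ2 hx
    have hnum : 0 < Real.log (1 + x / σ2) - x / (σ2 + x) := by linarith [key x hx]
    positivity
  · apply concaveOn_of_hasDerivWithinAt2_nonpos (convex_Ioi 0)
      (f' := fun x => (Real.log (1 + x / σ2) - x / (σ2 + x)) / (Real.log (1 + x / σ2)) ^ 2)
      (f'' := fun x => (2 * x - (2 * σ2 + x) * Real.log (1 + x / σ2)) /
        ((σ2 + x) ^ 2 * (Real.log (1 + x / σ2)) ^ 3)) hcont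
    · intro x hx
      rw [interior_Ioi] at hx ⊢
      exact (aux_hf hσ2 hx).hasDerivWithinAt
    · intro x hx
      rw [interior_Ioi] at hx ⊢
      exact (aux_hf' hσ2 hx).hasDerivWithinAt
    · intro x hx
      rw [interior_Ioi] at hx
      replace hx : 0 < x := hx
      have hL := aux_Lpos hσ2 hx
      have hcx : (0:ℝ) < σ2 + x := by linarith
      have hB := aux_logB (x := x / σ2) (by positivity)
      have hnum : 2 * x - (2 * σ2 + x) * Real.log (1 + x / σ2) ≤ 0 := by
        have h2 : (2 + x / σ2) * σ2 = 2 * σ2 + x := by field_simp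
        nlinarith [mul_le_mul_of_nonneg_right hB hσ2.le]
      have hden : (0:ℝ) < (σ2 + x) ^ 2 * (Real.log (1 + x / σ2)) ^ 3 := by positivity
      exact div_nonpos_of_nonpos_of_nonneg hnum hden.le
end

section
/- Let K be a positive integer and σ² > 0, and let C1_k > 0, C3_k > 0, C4_k > 0 (k = 1,…,K), T^E ≥ 0, and T_max, T_low be real constants with T^E < T_low ≤ T_max. Define h1(ζ) = ζ/log(1 + ζ/σ²) for ζ > 0 and h2_k(τ) = σ²·(2^{C3_k/(τ − T^E)} − 1) for τ > T^E. Consider the problem: minimize Σ_{k=1}^{K} C1_k·h1(ζ_k) over variables ζ_1,…,ζ_K and τ subject to T_low ≤ τ ≤ T_max and h2_k(τ) ≤ ζ_k ≤ C4_k for all k. Assume feasibility at the candidate point, i.e., h2_k(T_max) ≤ C4_k for all k. Then τ* = T_max and ζ*_k = h2_k(T_max) is a global minimizer: for every feasible (ζ_1,…,ζ_K, τ), Σ_k C1_k·h1(ζ*_k) ≤ Σ_k C1_k·h1(ζ_k). -/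
open Finset

/-- `a * log(1+b) ≤ b * log(1+a)` for `0 < a ≤ b`, i.e. `log(1+x)/x` is decreasing. -/
lemma mul_log_le (a b : ℝ) (ha : 0 < a) (hab : a ≤ b) :
    a * Real.log (1 + b) ≤ b * Real.log (1 + a) := by
  have hb : 0 < b := ha.trans_le hab
  have hcc : ConcaveOn ℝ (Set.Ioi 0) Real.log := strictConcaveOn_log_Ioi.concaveOn
  have h1 : (1 : ℝ) ∈ Set.Ioi (0:ℝ) := by norm_num
  have h2 : (1 + b) ∈ Set.Ioi (0:ℝ) := by simp; linarith
  have hw1 : (0:ℝ) ≤ 1 - a / b := by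
    have : a / b ≤ 1 := (div_le_one hb).2 hab
    linarith
  have hw2 : (0:ℝ) ≤ a / b := by positivity
  have hsum : (1 - a / b) + a / b = 1 := by ring
  have := hcc.2 h1 h2 hw1 hw2 hsum
  simp only [smul_eq_mul, Real.log_one, mul_one, mul_zero, zero_add] at this
  have harg : (1 - a / b) + a / b * (1 + b) = 1 + a := by
    field_simp
    ring
  rw [harg] at this
  -- this : a / b * Real.log (1 + b) ≤ Real.log (1 + a)
  have := mul_le_mul_of_nonneg_left this hb.le
  calc a * Real.log (1 + b) = b * (a / b * Real.log (1 + b)) := by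
        field_simp
    _ ≤ b * Real.log (1 + a) := this

/-- monotonicity of `h1`. -/
lemma h1_mono (σ2 : ℝ) (hσ2 : 0 < σ2) {a b : ℝ} (ha : 0 < a) (hab : a ≤ b) :
    a / Real.log (1 + a / σ2) ≤ b / Real.log (1 + b / σ2) := by
  have hx : 0 < a / σ2 := by positivity
  have hy : 0 < b / σ2 := div_pos (ha.trans_le hab) hσ2
  have hxy : a / σ2 ≤ b / σ2 := by gcongr
  have hla : 0 < Real.log (1 + a / σ2) := Real.log_pos (by linarith)
  have hlb : 0 < Real.log (1 + b / σ2) := Real.log_pos (by linarith)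
  have key := mul_log_le (a / σ2) (b / σ2) hx hxy
  rw [div_le_div_iff₀ hla hlb]
  have := mul_le_mul_of_nonneg_left key hσ2.le
  calc a * Real.log (1 + b / σ2) = σ2 * (a / σ2 * Real.log (1 + b / σ2)) := by
        field_simp
    _ ≤ σ2 * (b / σ2 * Real.log (1 + a / σ2)) := this
    _ = b * Real.log (1 + a / σ2) := by field_simp

/-- **Equations (31)–(32)**: the closed-form solution `τ* = T_max`,
`ζ*_k = h2_k(T_max)` is a global minimizer of the data-uploading subproblem. -/
theorem data_uploading_closed_form_optimal
    (K : ℕ) (hK : 0 < K)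
    (σ2 : ℝ) (hσ2 : 0 < σ2)
    (C1 C3 C4 : Fin K → ℝ)
    (hC1 : ∀ k, 0 < C1 k) (hC3 : ∀ k, 0 < C3 k) (hC4 : ∀ k, 0 < C4 k)
    (TE Tmax Tlow : ℝ) (hTE : 0 ≤ TE) (hTlow : TE < Tlow) (hTmax : Tlow ≤ Tmax)
    -- feasibility of the candidate point
    (hfeas : ∀ k, σ2 * ((2 : ℝ) ^ (C3 k / (Tmax - TE)) - 1) ≤ C4 k) :
    ∀ (ζ : Fin K → ℝ) (τ : ℝ),
      Tlow ≤ τ → τ ≤ Tmax →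
      (∀ k, σ2 * ((2 : ℝ) ^ (C3 k / (τ - TE)) - 1) ≤ ζ k ∧ ζ k ≤ C4 k) →
      ∑ k : Fin K, C1 k *
          ((σ2 * ((2 : ℝ) ^ (C3 k / (Tmax - TE)) - 1)) /
            Real.log (1 + (σ2 * ((2 : ℝ) ^ (C3 k / (Tmax - TE)) - 1)) / σ2))
        ≤ ∑ k : Fin K, C1 k * (ζ k / Real.log (1 + ζ k / σ2)) := by
  intro ζ τ hτl hτu hcon
  apply Finset.sum_le_sum
  intro k _
  have hτTE : 0 < τ - TE := by linarith
  have hTmaxTE : 0 < Tmax - TE := by linarith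
  -- exponent monotonicity
  have hexp : C3 k / (Tmax - TE) ≤ C3 k / (τ - TE) := by
    apply div_le_div_of_nonneg_left (hC3 k).le hτTE
    linarith
  have hexp_pos : 0 < C3 k / (Tmax - TE) := div_pos (hC3 k) hTmaxTE
  have hrpow : (2:ℝ) ^ (C3 k / (Tmax - TE)) ≤ (2:ℝ) ^ (C3 k / (τ - TE)) :=
    Real.rpow_le_rpow_of_exponent_le one_le_two hexp
  have hgt1 : (1:ℝ) < (2:ℝ) ^ (C3 k / (Tmax - TE)) :=
    (Real.one_lt_rpow_iff_of_pos (by norm_num)).2 (Or.inl ⟨one_lt_two, hexp_pos⟩)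
  set z : ℝ := σ2 * ((2 : ℝ) ^ (C3 k / (Tmax - TE)) - 1) with hz
  have hzpos : 0 < z := by
    apply mul_pos hσ2; linarith
  have hzle : z ≤ ζ k := by
    have h1 := (hcon k).1
    have : z ≤ σ2 * ((2 : ℝ) ^ (C3 k / (τ - TE)) - 1) := by
      apply mul_le_mul_of_nonneg_left _ hσ2.le
      linarith
    linarith
  exact mul_le_mul_of_nonneg_left (h1_mono σ2 hσ2 hzpos hzle) (hC1 k).le
end
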